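/- arXiv:2311.03719 — 3 statements merged into one kernel-verified Lean document; each statement's English description precedes it below -/
import Mathlib

section
/- Let P₀, P₁, …, P_p be operators such that any two either commute or anticommute (PᵢPⱼ = ±PⱼPᵢ for all i, j). If for every i ∈ {1, …, p} the operator Pᵢ anticommutes with an odd number of the operators Pⱼ with j < i, then the nested commutator satisfies [P_p, [P_{p-1}, …, [P₁, P₀]…]] = 2^p · (P_p ⋯ P₁ P₀). -/
/-- The nested commutator `[P p, [P (p-1), …, [P 1, P 0]…]]`. -/
def nestedComm {M : Type*} [Ring M] (P : ℕ → M) : ℕ → M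
  | 0 => P 0
  | k + 1 => P (k + 1) * nestedComm P k - nestedComm P k * P (k + 1)

/-- The descending product `P p * ⋯ * P 1 * P 0`. -/
def prodDesc {M : Type*} [Ring M] (P : ℕ → M) : ℕ → M
  | 0 => P 0
  | k + 1 => P (k + 1) * prodDesc P k

/-!
Moving `P i` across the product `P (i-1) ⋯ P 0` picks up one sign for every factor it
anticommutes with, so the oddness hypothesis says exactly that `P i` anticommutes with
`P (i-1) ⋯ P 0`. The commutator of anticommuting `a` and `b` is `2 a b`, and induction on
the nesting depth gives `[P p, …, [P 1, P 0]…] = 2^p P p ⋯ P 0`.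
-/

open Finset

section Ring

variable {M : Type*} [Ring M]

open scoped Classical in
theorem prodDesc_mul_eq_neg_one_pow_mul (P : ℕ → M) (x : M)
    (hx : ∀ j, P j * x = x * P j ∨ P j * x = -(x * P j)) (k : ℕ) :
    prodDesc P k * x =
      (-1) ^ #{j ∈ range (k + 1) | P j * x = -(x * P j)} * (x * prodDesc P k) := by
  induction k with
  | zero =>
    by_cases hanti : P 0 * x = -(x * P 0)
    · simp [prodDesc, filter_singleton, hanti]
    · simpa [prodDesc, filter_singleton, hanti] using hx 0
  | succ k ih =>
    have hnot : k + 1 ∉ {j ∈ range (k + 1) | P j * x = -(x * P j)} := by simp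
    rw [range_add_one, filter_insert]
    calc prodDesc P (k + 1) * x = P (k + 1) * (prodDesc P k * x) := by
          rw [prodDesc, mul_assoc]
      _ = (-1) ^ #{j ∈ range (k + 1) | P j * x = -(x * P j)} *
            (P (k + 1) * x * prodDesc P k) := by
          rw [ih, ((Commute.neg_one_right _).pow_right _).left_comm, mul_assoc]
      _ = _ := by
          by_cases hanti : P (k + 1) * x = -(x * P (k + 1))
          · rw [if_pos hanti, card_insert_of_notMem hnot, hanti, pow_succ]
            simp [prodDesc, mul_assoc]
          · rw [if_neg hanti, (hx (k + 1)).resolve_right hanti, prodDesc, mul_assoc]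

theorem nestedComm_eq_two_pow_nsmul_prodDesc (P : ℕ → M) (p : ℕ)
    (hanti : ∀ k < p, prodDesc P k * P (k + 1) = -(P (k + 1) * prodDesc P k)) :
    nestedComm P p = 2 ^ p • prodDesc P p := by
  induction p with
  | zero => simp [nestedComm, prodDesc]
  | succ k ih =>
    rw [nestedComm, ih fun i hi => hanti i (by omega), mul_smul_comm, smul_mul_assoc,
      hanti k (by omega), prodDesc, smul_neg, sub_neg_eq_add, ← two_nsmul, smul_smul, pow_succ']

end Ring

/-- If operators pairwise commute or anticommute, and each `P i`
(`1 ≤ i ≤ p`) anticommutes with an odd number of the `P j`, `j < i`, then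
`[P p, …, [P 1, P 0]…] = 2^p • (P p ⋯ P 1 P 0)`. -/
theorem nestedComm_eq_of_odd_anticomm {N : ℕ} (p : ℕ)
    (P : ℕ → Matrix (Fin N) (Fin N) ℂ)
    (hcomm : ∀ i j, P i * P j = P j * P i ∨ P i * P j = -(P j * P i))
    (hodd : ∀ i, 1 ≤ i → i ≤ p →
      Odd ({j | j < i ∧ P j * P i = -(P i * P j)}.ncard)) :
    nestedComm P p = (2 ^ p : ℂ) • prodDesc P p := by
  have hanti : ∀ k < p, prodDesc P k * P (k + 1) = -(P (k + 1) * prodDesc P k) := by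
    intro k hk
    rw [prodDesc_mul_eq_neg_one_pow_mul P (P (k + 1)) (fun j => hcomm j (k + 1)), Odd.neg_one_pow,
      neg_one_mul]
    rw [← Set.ncard_coe_finset]
    convert hodd (k + 1) (by omega) hk using 2
    ext j
    simp
  rw [nestedComm_eq_two_pow_nsmul_prodDesc P p hanti]
  exact_mod_cast (Nat.cast_smul_eq_nsmul ℂ (2 ^ p) (prodDesc P p)).symm
end

section
/- Let P₀, P₁, …, P_p be operators such that any two either commute or anticommute. If there exists some i ∈ {1, …, p} such that Pᵢ anticommutes with an even number of the operators Pⱼ with j < i, then the nested commutator [P_p, [P_{p-1}, …, [P₁, P₀]…]] = 0. -/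
section SignedCommute

variable {M : Type*} [Ring M] {a x y : M} {s t : ℤˣ}

lemma mul_eq_ite_units_smul [DecidableEq M] (h : a * x = x * a ∨ a * x = -(x * a)) :
    a * x = (if x * a = -(a * x) then -1 else 1 : ℤˣ) • (x * a) := by
  by_cases hx : x * a = -(a * x)
  · simp [hx]
  · rcases h with hc | hc
    · simp [hc]
    · exact (hx (by simp [hc])).elim

lemma mul_mul_eq_units_smul (hx : a * x = s • (x * a)) (hy : a * y = t • (y * a)) :
    a * (x * y) = (s * t) • (x * y * a) := by
  rw [← mul_assoc, hx, smul_mul_assoc, mul_assoc, hy, mul_smul_comm, smul_smul, ← mul_assoc]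

lemma mul_commutator_eq_units_smul (hx : a * x = s • (x * a)) (hy : a * y = t • (y * a)) :
    a * (y * x - x * y) = (s * t) • ((y * x - x * y) * a) := by
  rw [mul_sub, sub_mul, smul_sub, mul_mul_eq_units_smul hx hy, mul_mul_eq_units_smul hy hx,
    mul_comm t]

lemma mul_nestedComm_eq_prod_smul (P : ℕ → M) (ε : ℕ → ℤˣ) (h : ∀ j, a * P j = ε j • (P j * a))
    (k : ℕ) : a * nestedComm P k = (∏ j ∈ Finset.range (k + 1), ε j) • (nestedComm P k * a) := by
  induction k with
  | zero => simpa [nestedComm] using h 0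
  | succ k ih =>
    rw [Finset.prod_range_succ]
    exact mul_commutator_eq_units_smul ih (h (k + 1))

end SignedCommute

lemma nestedComm_succ_eq_zero_of_commute {M : Type*} [Ring M] (P : ℕ → M) (k : ℕ)
    (h : Commute (P (k + 1)) (nestedComm P k)) : nestedComm P (k + 1) = 0 :=
  sub_eq_zero.mpr h.eq

lemma nestedComm_eq_zero_of_le {M : Type*} [Ring M] (P : ℕ → M) {i k : ℕ} (hik : i ≤ k)
    (h : nestedComm P i = 0) : nestedComm P k = 0 := by
  induction k, hik using Nat.le_induction with
  | base => exact h
  | succ k _ ih => simp [nestedComm, ih]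

/-- If operators pairwise commute or anticommute, and some `P i`
(`1 ≤ i ≤ p`) anticommutes with an even number of the `P j`, `j < i`, then
`[P p, …, [P 1, P 0]…] = 0`. -/
theorem nestedComm_eq_zero_of_even_anticomm {N : ℕ} (p : ℕ)
    (P : ℕ → Matrix (Fin N) (Fin N) ℂ)
    (hcomm : ∀ i j, P i * P j = P j * P i ∨ P i * P j = -(P j * P i))
    (heven : ∃ i, 1 ≤ i ∧ i ≤ p ∧
      Even ({j | j < i ∧ P j * P i = -(P i * P j)}.ncard)) :
    nestedComm P p = 0 := by
  classical
  obtain ⟨_ | k, hk, hkp, hev⟩ := heven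
  · omega
  set anti : ℕ → Prop := fun j ↦ P j * P (k + 1) = -(P (k + 1) * P j)
  let ε : ℕ → ℤˣ := fun j ↦ if anti j then -1 else 1
  have hsign : ∀ j, P (k + 1) * P j = ε j • (P j * P (k + 1)) :=
    fun j ↦ mul_eq_ite_units_smul (hcomm (k + 1) j)
  have hcard : {j | j < k + 1 ∧ anti j} = ↑((Finset.range (k + 1)).filter anti) := by
    ext j; simp
  have hprod : ∏ j ∈ Finset.range (k + 1), ε j = 1 := by
    rw [Finset.prod_ite, Finset.prod_const, Finset.prod_const, one_pow, mul_one]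
    rw [hcard, Set.ncard_coe_finset] at hev
    exact hev.neg_one_pow
  have hcommute : Commute (P (k + 1)) (nestedComm P k) := by
    have := mul_nestedComm_eq_prod_smul P ε hsign k
    rwa [hprod, one_smul] at this
  exact nestedComm_eq_zero_of_le P hkp (nestedComm_succ_eq_zero_of_commute P k hcommute)
end

section
/- Let P₀, …, P_p be weighted Pauli strings with nonzero weights (i.e., each Pᵢ = cᵢ Qᵢ where cᵢ ≠ 0 is a scalar and Qᵢ is a tensor product of single-qubit Pauli matrices I, X, Y, Z on n qubits). Then [P_p, …, [P₁, P₀]…] = 0 if and only if there exists some i ∈ {1, …, p} such that Pᵢ anticommutes with an even number of the operators Pⱼ with j < i. -/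
/-- The single-qubit Pauli matrices `I, X, Y, Z`. -/
def pauliBase : Fin 4 → Matrix (Fin 2) (Fin 2) ℂ
  | 0 => 1
  | 1 => !![0, 1; 1, 0]
  | 2 => !![0, -Complex.I; Complex.I, 0]
  | 3 => !![1, 0; 0, -1]

/-- The `n`-qubit Pauli string given by the tensor product `⨂ i, pauliBase (σ i)`. -/
def pauliString {n : ℕ} (σ : Fin n → Fin 4) :
    Matrix (Fin n → Fin 2) (Fin n → Fin 2) ℂ :=
  fun x y => ∏ i, pauliBase (σ i) (x i) (y i)


/-!
The argument needs only that the `P i` are invertible, that any two of them commute or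
anticommute, and that `2` is invertible. `P m` anticommutes with the product `P k ⋯ P 0`
exactly when it anticommutes with an odd number of its factors. Hence, as long as every
`P i` anticommutes with an odd number of its predecessors, each commutator step doubles
`P i * C` and the nested commutator is `2 ^ k * P k ⋯ P 0`, a unit; at the first `i` with an
even count, `P i` commutes with that product, so the commutator vanishes, and it stays zero
from then on.
-/

def Anticommute {M : Type*} [Mul M] [Neg M] (a b : M) : Prop := a * b = -(b * a)

theorem Anticommute.smul_smul {R A : Type*} [CommSemiring R] [Ring A] [Algebra R A] {a b : A}
    (h : Anticommute a b) (r s : R) : Anticommute (r • a) (s • b) := by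
  rw [Anticommute, smul_mul_smul_comm, smul_mul_smul_comm, h, mul_comm, smul_neg]

open Finset

section NestedComm

variable {M : Type*} [Ring M] (P : ℕ → M)

def descProd : ℕ → M
  | 0 => P 0
  | k + 1 => P (k + 1) * descProd k

open Classical in
noncomputable def anticommCount (k m : ℕ) : ℕ := #{j ∈ range k | Anticommute (P j) (P m)}

theorem anticommCount_succ (k m : ℕ) [Decidable (Anticommute (P k) (P m))] :
    anticommCount P (k + 1) m = anticommCount P k m + if Anticommute (P k) (P m) then 1 else 0 := by
  classical
  simp only [anticommCount, range_add_one, filter_insert]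
  split_ifs with h
  · rw [card_insert_of_notMem (by simp)]
  · rfl

theorem ncard_anticommute_eq_anticommCount (i : ℕ) :
    {j | j < i ∧ Anticommute (P j) (P i)}.ncard = anticommCount P i i := by
  classical
  rw [anticommCount, ← Set.ncard_coe_finset, coe_filter]
  simp only [mem_range]

variable {P}

theorem mul_eq_neg_one_pow_mul {a b : M} (h : Commute a b ∨ Anticommute a b)
    [Decidable (Anticommute a b)] :
    a * b = (-1) ^ (if Anticommute a b then 1 else 0) * (b * a) := by
  split_ifs with ha
  · rw [pow_one, neg_one_mul]; exact ha
  · rw [pow_zero, one_mul]; exact h.resolve_right ha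

theorem descProd_mul (hP : ∀ i j, Commute (P i) (P j) ∨ Anticommute (P i) (P j)) (k m : ℕ) :
    descProd P k * P m = (-1) ^ anticommCount P (k + 1) m * (P m * descProd P k) := by
  classical
  induction k with
  | zero =>
    rw [descProd, anticommCount_succ, show anticommCount P 0 m = 0 by simp [anticommCount],
      zero_add]
    exact mul_eq_neg_one_pow_mul (hP 0 m)
  | succ k ih =>
    have hneg (a : ℕ) (x : M) : Commute ((-1) ^ a) x := (Commute.neg_one_left x).pow_left a
    calc descProd P (k + 1) * P m
        = P (k + 1) * ((-1) ^ anticommCount P (k + 1) m * (P m * descProd P k)) := by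
          rw [descProd, mul_assoc, ih]
      _ = (-1) ^ anticommCount P (k + 1) m * (P (k + 1) * P m * descProd P k) := by
          rw [← mul_assoc, ← (hneg _ _).eq, mul_assoc, mul_assoc]
      _ = _ := by
          rw [mul_eq_neg_one_pow_mul (hP (k + 1) m), anticommCount_succ P (k + 1), pow_add,
            descProd]
          simp only [mul_assoc]

theorem isUnit_descProd (hP : ∀ i, IsUnit (P i)) (k : ℕ) : IsUnit (descProd P k) := by
  induction k with
  | zero => exact hP 0
  | succ k ih => exact (hP (k + 1)).mul ih

theorem nestedComm_eq_two_pow_mul_descProd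
    (hP : ∀ i j, Commute (P i) (P j) ∨ Anticommute (P i) (P j)) (k : ℕ)
    (hodd : ∀ i, 1 ≤ i → i ≤ k → ¬Even (anticommCount P i i)) :
    nestedComm P k = 2 ^ k * descProd P k := by
  induction k with
  | zero => simp [nestedComm, descProd]
  | succ k ih =>
    have hanti : descProd P k * P (k + 1) = -(P (k + 1) * descProd P k) := by
      rw [descProd_mul hP, (Nat.not_even_iff_odd.mp (hodd (k + 1) le_add_self le_rfl)).neg_one_pow,
        neg_one_mul]
    have h2 : Commute (P (k + 1)) (2 ^ k) := (Commute.ofNat_right _ 2).pow_right k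
    rw [nestedComm, ih (fun i hi1 hik => hodd i hi1 (hik.trans k.le_succ)), mul_assoc, hanti,
      ← mul_assoc, h2.eq, descProd, pow_succ]
    noncomm_ring

theorem nestedComm_eq_zero_of_even (hP : ∀ i j, Commute (P i) (P j) ∨ Anticommute (P i) (P j))
    (k : ℕ) (heven : ∃ i, 1 ≤ i ∧ i ≤ k ∧ Even (anticommCount P i i)) :
    nestedComm P k = 0 := by
  induction k with
  | zero => omega
  | succ k ih =>
    by_cases hprev : ∃ i, 1 ≤ i ∧ i ≤ k ∧ Even (anticommCount P i i)
    · rw [nestedComm, ih hprev, mul_zero, zero_mul, sub_zero]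
    push Not at hprev
    obtain ⟨i, hi1, hik, hi⟩ := heven
    obtain rfl : i = k + 1 := by
      by_contra hne
      exact hprev i hi1 (by omega) hi
    have hcomm : Commute (descProd P k) (P (k + 1)) := by
      rw [Commute, SemiconjBy, descProd_mul hP, hi.neg_one_pow, one_mul]
    have h2 : Commute (P (k + 1)) (nestedComm P k) := by
      rw [nestedComm_eq_two_pow_mul_descProd hP k hprev]
      exact ((Commute.ofNat_right _ 2).pow_right k).mul_right hcomm.symm
    rw [nestedComm, h2.eq, sub_self]

theorem nestedComm_eq_zero_iff_exists_even [Nontrivial M] (h2 : IsUnit (2 : M))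
    (hunit : ∀ i, IsUnit (P i)) (hP : ∀ i j, Commute (P i) (P j) ∨ Anticommute (P i) (P j))
    (p : ℕ) :
    nestedComm P p = 0 ↔
      ∃ i, 1 ≤ i ∧ i ≤ p ∧ Even {j | j < i ∧ Anticommute (P j) (P i)}.ncard := by
  simp only [ncard_anticommute_eq_anticommCount]
  refine ⟨fun h0 => ?_, nestedComm_eq_zero_of_even hP p⟩
  by_contra hno
  push Not at hno
  rw [nestedComm_eq_two_pow_mul_descProd hP p hno] at h0
  exact ((h2.pow p).mul (isUnit_descProd hunit p)).ne_zero h0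

end NestedComm

namespace Matrix

variable {ι R : Type*} [Fintype ι] {κ : ι → Type*} [CommRing R]

def piKronecker (A : ∀ i, Matrix (κ i) (κ i) R) : Matrix (∀ i, κ i) (∀ i, κ i) R :=
  fun x y => ∏ i, A i (x i) (y i)

theorem piKronecker_mul [DecidableEq ι] [∀ i, Fintype (κ i)]
    (A B : ∀ i, Matrix (κ i) (κ i) R) :
    piKronecker A * piKronecker B = piKronecker (A * B) := by
  ext x y
  simp only [piKronecker, mul_apply, Pi.mul_apply, Fintype.prod_sum, ← Finset.prod_mul_distrib]

theorem piKronecker_smul (s : ι → R) (A : ∀ i, Matrix (κ i) (κ i) R) :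
    piKronecker (fun i => s i • A i) = (∏ i, s i) • piKronecker A := by
  ext x y
  simp only [piKronecker, smul_apply, smul_eq_mul, Finset.prod_mul_distrib]

theorem piKronecker_one [∀ i, DecidableEq (κ i)] :
    piKronecker (1 : ∀ i, Matrix (κ i) (κ i) R) = 1 := by
  ext x y
  simp only [piKronecker, Pi.one_apply, one_apply, Finset.prod_boole, funext_iff, Finset.mem_univ,
    true_implies]

end Matrix

theorem pauliBase_mul_self (a : Fin 4) : pauliBase a * pauliBase a = 1 := by
  fin_cases a <;> simp [pauliBase, Matrix.one_fin_two]

theorem pauliBase_mul_comm (a b : Fin 4) :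
    pauliBase a * pauliBase b =
      (if a = 0 ∨ b = 0 ∨ a = b then 1 else -1 : ℂ) • (pauliBase b * pauliBase a) := by
  fin_cases a <;> fin_cases b <;> simp [pauliBase, Matrix.one_fin_two]

theorem pauliString_eq_piKronecker {n : ℕ} (σ : Fin n → Fin 4) :
    pauliString σ = Matrix.piKronecker fun i => pauliBase (σ i) := rfl

theorem pauliString_mul_self {n : ℕ} (σ : Fin n → Fin 4) :
    pauliString σ * pauliString σ = 1 := by
  simp only [pauliString_eq_piKronecker, Matrix.piKronecker_mul, Pi.mul_def, pauliBase_mul_self]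
  exact Matrix.piKronecker_one

theorem pauliString_commute_or_anticommute {n : ℕ} (σ τ : Fin n → Fin 4) :
    Commute (pauliString σ) (pauliString τ) ∨
      Anticommute (pauliString σ) (pauliString τ) := by
  set s : Fin n → ℂ := fun i => if σ i = 0 ∨ τ i = 0 ∨ σ i = τ i then 1 else -1
  have hs : (∏ i, s i) * ∏ i, s i = 1 := by
    rw [← Finset.prod_mul_distrib]
    exact Finset.prod_eq_one fun i _ => by simp only [s]; split_ifs <;> norm_num
  have hmul :
      pauliString σ * pauliString τ = (∏ i, s i) • (pauliString τ * pauliString σ) := by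
    simp only [pauliString_eq_piKronecker, Matrix.piKronecker_mul, ← Matrix.piKronecker_smul]
    exact congrArg _ (funext fun i => pauliBase_mul_comm (σ i) (τ i))
  rcases mul_self_eq_one_iff.mp hs with h | h
  · left; rw [Commute, SemiconjBy, hmul, h, one_smul]
  · right; rw [Anticommute, hmul, h, neg_one_smul]

theorem isUnit_smul_pauliString {n : ℕ} {c : ℂ} (hc : c ≠ 0) (σ : Fin n → Fin 4) :
    IsUnit (c • pauliString σ) :=
  IsUnit.of_mul_eq_one (c⁻¹ • pauliString σ) <| by
    rw [smul_mul_smul_comm, mul_inv_cancel₀ hc, pauliString_mul_self, one_smul]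

/-- For weighted Pauli strings `P i = c i • Q i` with nonzero weights,
the nested commutator `[P p, …, [P 1, P 0]…]` vanishes iff some `P i` (`1 ≤ i ≤ p`)
anticommutes with an even number of the `P j`, `j < i`. -/
theorem nestedComm_eq_zero_iff {n : ℕ} (p : ℕ) (c : ℕ → ℂ) (σ : ℕ → Fin n → Fin 4)
    (hc : ∀ i, c i ≠ 0)
    (P : ℕ → Matrix (Fin n → Fin 2) (Fin n → Fin 2) ℂ)
    (hP : ∀ i, P i = c i • pauliString (σ i)) :
    nestedComm P p = 0 ↔
      ∃ i, 1 ≤ i ∧ i ≤ p ∧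
        Even ({j | j < i ∧ P j * P i = -(P i * P j)}.ncard) := by
  have h2 : IsUnit (2 : Matrix (Fin n → Fin 2) (Fin n → Fin 2) ℂ) := by
    simpa only [map_ofNat] using (two_ne_zero' ℂ).isUnit.map (algebraMap ℂ _)
  have hunit (i : ℕ) : IsUnit (P i) := hP i ▸ isUnit_smul_pauliString (hc i) (σ i)
  have hca (i j : ℕ) : Commute (P i) (P j) ∨ Anticommute (P i) (P j) := by
    rw [hP i, hP j]
    exact (pauliString_commute_or_anticommute (σ i) (σ j)).imp
      (fun h => (h.smul_left _).smul_right _) (fun h => h.smul_smul _ _)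
  exact nestedComm_eq_zero_iff_exists_even h2 hunit hca p
end
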